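/- Let G be a graph and P, P' two distinct regular profiles in G. If (A,B) is a separation of finite order that distinguishes P and P' efficiently, then (A,B) is tight. -/

import Mathlib

/-- A separation of a graph `G`: a pair of vertex sets covering `V` with no edge
between `A ∖ B` and `B ∖ A`. -/
structure GraphSep {V : Type} (G : SimpleGraph V) where
  A : Set V
  B : Set V
  union_eq : A ∪ B = Set.univ
  no_edge : ∀ a ∈ A \ B, ∀ b ∈ B \ A, ¬ G.Adj a b

namespace GraphSep

variable {V V' : Type} {G : SimpleGraph V} {G' : SimpleGraph V'}

/-- The inverse `(B,A)` of a separation `(A,B)`. -/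
def inv (s : GraphSep G) : GraphSep G where
  A := s.B
  B := s.A
  union_eq := by rw [Set.union_comm]; exact s.union_eq
  no_edge := fun a ha b hb h => s.no_edge b hb a ha h.symm

/-- The separator `A ∩ B`. -/
def sepSet (s : GraphSep G) : Set V := s.A ∩ s.B

/-- The order `|A ∩ B|` of a separation, as an extended natural number. -/
noncomputable def order (s : GraphSep G) : ℕ∞ := (s.A ∩ s.B).encard

/-- `(A,B) ≤ (C,D)` iff `A ⊆ C` and `D ⊆ B`. -/
protected def le (s t : GraphSep G) : Prop := s.A ⊆ t.A ∧ t.B ⊆ s.B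

/-- Two separations are nested if after possibly replacing either by its inverse
they are `≤`-comparable. -/
def Nested (s t : GraphSep G) : Prop :=
  s.le t ∨ s.le t.inv ∨ s.inv.le t ∨ s.inv.le t.inv

lemma mem_A_or_B (s : GraphSep G) (x : V) : x ∈ s.A ∨ x ∈ s.B := by
  have h : x ∈ s.A ∪ s.B := by rw [s.union_eq]; exact Set.mem_univ x
  exact (Set.mem_union _ _ _).1 h

/-- The join `(A,B) ∨ (C,D) = (A ∪ C, B ∩ D)`. -/
def join (s t : GraphSep G) : GraphSep G where
  A := s.A ∪ t.A
  B := s.B ∩ t.B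
  union_eq := by
    apply Set.eq_univ_of_forall
    intro x
    rcases s.mem_A_or_B x with h1 | h1
    · exact Or.inl (Or.inl h1)
    · rcases t.mem_A_or_B x with h2 | h2
      · exact Or.inl (Or.inr h2)
      · exact Or.inr ⟨h1, h2⟩
  no_edge := by
    rintro a ⟨haA, haB⟩ b ⟨hbB, hbA⟩ hadj
    by_cases hsB : a ∈ s.B
    · have hatB : a ∉ t.B := fun h => haB ⟨hsB, h⟩
      have hatA : a ∈ t.A := (t.mem_A_or_B a).resolve_right hatB
      exact t.no_edge a ⟨hatA, hatB⟩ b ⟨hbB.2, fun h => hbA (Or.inr h)⟩ hadj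
    · have hasA : a ∈ s.A := (s.mem_A_or_B a).resolve_right hsB
      exact s.no_edge a ⟨hasA, hsB⟩ b ⟨hbB.1, fun h => hbA (Or.inl h)⟩ hadj

/-- The image of a separation under a graph isomorphism. -/
def map (φ : G ≃g G') (s : GraphSep G) : GraphSep G' where
  A := ⇑φ '' s.A
  B := ⇑φ '' s.B
  union_eq := by
    apply Set.eq_univ_of_forall
    intro y
    rcases s.mem_A_or_B (φ.symm y) with h | h
    · exact Or.inl ⟨φ.symm y, h, φ.apply_symm_apply y⟩
    · exact Or.inr ⟨φ.symm y, h, φ.apply_symm_apply y⟩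
  no_edge := by
    rintro a ⟨⟨x, hxA, rfl⟩, haB⟩ b ⟨⟨y, hyB, rfl⟩, hbA⟩ hadj
    exact s.no_edge x ⟨hxA, fun h => haB ⟨x, h, rfl⟩⟩ y ⟨hyB, fun h => hbA ⟨y, h, rfl⟩⟩
      (φ.map_adj_iff.mp hadj)

/-- The neighbourhood of a set of vertices. -/
def nbhd (G : SimpleGraph V) (X : Set V) : Set V := {v | v ∉ X ∧ ∃ x ∈ X, G.Adj v x}

/-- `w` can be reached from `v` by a walk avoiding `X`. -/
def AvoidReach (G : SimpleGraph V) (X : Set V) (v w : V) : Prop :=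
  ∃ p : G.Walk v w, ∀ u ∈ p.support, u ∉ X

/-- `C` is a (connected) component of `G − X`. -/
def IsCompOf (G : SimpleGraph V) (X C : Set V) : Prop :=
  ∃ v, v ∉ X ∧ C = {w | AvoidReach G X v w}

/-- A separation `(A,B)` is tight if each of `A ∖ B` and `B ∖ A` contains a component
of `G − (A ∩ B)` whose neighbourhood is all of `A ∩ B`. -/
def IsTight (s : GraphSep G) : Prop :=
  (∃ C, IsCompOf G s.sepSet C ∧ nbhd G C = s.sepSet ∧ C ⊆ s.A \ s.B) ∧
  (∃ C, IsCompOf G s.sepSet C ∧ nbhd G C = s.sepSet ∧ C ⊆ s.B \ s.A)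

/-- An orientation of `S_k`: it contains only separations of order `< k`, contains
at least one of `s, s⁻¹` for every separation of order `< k`, and contains both only
if they coincide. -/
def IsOrientation (k : ℕ∞) (P : Set (GraphSep G)) : Prop :=
  (∀ s ∈ P, s.order < k) ∧
  (∀ s : GraphSep G, s.order < k → (s ∈ P ∨ s.inv ∈ P)) ∧
  (∀ s ∈ P, s.inv ∈ P → s.inv = s)

/-- Consistency: no two members `r, s` with distinct underlying separations satisfy
`r⁻¹ ≤ s`. -/
def Consistent (P : Set (GraphSep G)) : Prop :=
  ∀ r ∈ P, ∀ s ∈ P, r.inv.le s → r = s ∨ r = s.inv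

/-- A `k`-profile: a consistent orientation of `S_k` satisfying the profile property. -/
def IsProfile (k : ℕ∞) (P : Set (GraphSep G)) : Prop :=
  IsOrientation k P ∧ Consistent P ∧ ∀ s ∈ P, ∀ t ∈ P, (s.join t).inv ∉ P

/-- A profile in `G` is a `k`-profile for some `k ∈ ℕ ∪ {ℵ₀}`. -/
def IsProfileIn (G : SimpleGraph V) (P : Set (GraphSep G)) : Prop := ∃ k : ℕ∞, IsProfile k P

/-- A profile is regular if it contains no separation of the form `(V, X)`. -/
def RegularP (P : Set (GraphSep G)) : Prop := ∀ s ∈ P, s.A ≠ Set.univ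

/-- A profile is bounded if it is a `k`-profile for some finite `k` and is not a subset
of any `ℵ₀`-profile. -/
def BoundedP (P : Set (GraphSep G)) : Prop :=
  (∃ k : ℕ, IsProfile (k : ℕ∞) P) ∧ ∀ Q : Set (GraphSep G), IsProfile ⊤ Q → ¬ P ⊆ Q

/-- `s` distinguishes the profiles `P` and `P'`. -/
def Distinguishes (s : GraphSep G) (P P' : Set (GraphSep G)) : Prop :=
  (s ∈ P ∧ s.inv ∈ P') ∨ (s.inv ∈ P ∧ s ∈ P')

/-- `s` distinguishes `P` and `P'` efficiently: it has minimum order among all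
separations distinguishing `P` and `P'`. -/
def EffDist (s : GraphSep G) (P P' : Set (GraphSep G)) : Prop :=
  Distinguishes s P P' ∧ ∀ t : GraphSep G, Distinguishes t P P' → s.order ≤ t.order

/-- `P` and `P'` are distinguishable: some finite-order separation distinguishes them. -/
def Distinguishable (P P' : Set (GraphSep G)) : Prop :=
  ∃ s : GraphSep G, s.order < ⊤ ∧ Distinguishes s P P'

/-- Robustness of a profile. -/
def RobustP (P : Set (GraphSep G)) : Prop :=
  ∀ s ∈ P, ∀ t : GraphSep G, t.order < ⊤ →
    (s.join t).order < s.order → (s.join t.inv).order < s.order →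
    (s.join t ∈ P ∨ s.join t.inv ∈ P)

/-- A `k`-profile is principal if for every vertex set `X` with `|X| < k` it contains
`(V ∖ C, C ∪ X)` for some component `C` of `G − X`. -/
def PrincipalP (k : ℕ∞) (P : Set (GraphSep G)) : Prop :=
  ∀ X : Set V, X.encard < k →
    ∃ C, IsCompOf G X C ∧ ∃ s ∈ P, s.A = Cᶜ ∧ s.B = C ∪ X

/-- `c` is a corner separation of `s` and `t`. -/
def IsCornerSep (s t c : GraphSep G) : Prop :=
  ∃ s' ∈ ({s, s.inv} : Set (GraphSep G)), ∃ t' ∈ ({t, t.inv} : Set (GraphSep G)),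
    c = s'.join t' ∨ c = (s'.join t').inv

/-- The set `S ⊆ V ∖ {x,y}` separates `x` from `y` in `G`. -/
def SeparatesIn (G : SimpleGraph V) (x y : V) (S : Set V) : Prop :=
  x ∉ S ∧ y ∉ S ∧ ∀ p : G.Walk x y, ∃ u ∈ p.support, u ∈ S

/-- `S` is a `⊆`-minimal `x`–`y`-separator in `G`. -/
def MinSeparator (G : SimpleGraph V) (x y : V) (S : Set V) : Prop :=
  SeparatesIn G x y S ∧ ∀ S' ⊆ S, SeparatesIn G x y S' → S' = S

/-- The separation of `G` induced by an (oriented) edge of a tree-decomposition. -/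
def InducedSep {ι : Type} (T : SimpleGraph ι) (𝒱 : ι → Set V) (x : GraphSep G) : Prop :=
  ∃ t t' : ι, T.Adj t t' ∧
    x.A = (⋃ u ∈ {u : ι | ∃ p : T.Walk u t, s(t, t') ∉ p.edges}, 𝒱 u) ∧
    x.B = (⋃ u ∈ {u : ι | ∃ p : T.Walk u t', s(t, t') ∉ p.edges}, 𝒱 u)

/-- Opposite pairs of corner separations of `s` and `t`. -/
def OppPair (s t c d : GraphSep G) : Prop :=
  (c = s.join t ∧ d = s.inv.join t.inv) ∨ (c = s.inv.join t.inv ∧ d = s.join t) ∨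
  (c = s.join t.inv ∧ d = s.inv.join t) ∨ (c = s.inv.join t ∧ d = s.join t.inv)

end GraphSep

/-!
Suppose `A ∖ B` contains no tight component of `G − S`, where `S = A ∩ B` is finite. Then
every component in `A ∖ B` misses some `v ∈ S`; let `W_v` be the union of the components in
`A ∖ B` missing `v`, and `u_v = ((S ∖ {v}) ∪ W_v, V ∖ W_v)`, a separation of order `|S| - 1`.
If `(A,B) ∈ P` then `u_v ∈ P`, since otherwise `(A,B) ∨ u_v⁻¹ = (V, ·)` would lie in `P`; and
`u_v ∈ P'` by efficiency. But `(B,A) ∈ P'` joined with all the `u_v` is the separation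
`(V, ·)`, and its order is at most `|S|`, so it lies in `P'`, contradicting regularity.
-/

namespace GraphSep

variable {V : Type} {G : SimpleGraph V}

section AvoidReach

variable {X : Set V} {a b c : V}

lemma avoidReach_refl (ha : a ∉ X) : AvoidReach G X a a :=
  ⟨.nil, by simpa using ha⟩

lemma AvoidReach.trans (h₁ : AvoidReach G X a b) (h₂ : AvoidReach G X b c) :
    AvoidReach G X a c := by
  obtain ⟨p, hp⟩ := h₁
  obtain ⟨q, hq⟩ := h₂
  exact ⟨p.append q, fun u hu => ((p.mem_support_append_iff q).1 hu).elim (hp u) (hq u)⟩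

lemma AvoidReach.not_mem_right (h : AvoidReach G X a b) : b ∉ X := by
  obtain ⟨p, hp⟩ := h
  exact hp b p.end_mem_support

lemma AvoidReach.of_adj (h : AvoidReach G X a b) (hadj : G.Adj b c) (hc : c ∉ X) :
    AvoidReach G X a c := by
  refine h.trans ⟨hadj.toWalk, fun u hu => ?_⟩
  simp only [SimpleGraph.Adj.toWalk, SimpleGraph.Walk.support_cons,
    SimpleGraph.Walk.support_nil, List.mem_cons,
    List.not_mem_nil, or_false] at hu
  rcases hu with rfl | rfl
  exacts [h.not_mem_right, hc]

lemma nbhd_setOf_avoidReach_subset : nbhd G {x | AvoidReach G X a x} ⊆ X := by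
  rintro u ⟨hu, x, hx, hadj⟩
  by_contra huX
  exact hu (hx.of_adj hadj.symm huX)

end AvoidReach

lemma mem_A_diff_B_of_walk (s : GraphSep G) {a x : V} (p : G.Walk a x)
    (hp : ∀ u ∈ p.support, u ∉ s.sepSet) (ha : a ∈ s.A \ s.B) : x ∈ s.A \ s.B := by
  induction p with
  | nil => exact ha
  | @cons u v w huv q ih =>
    simp only [SimpleGraph.Walk.support_cons, List.mem_cons, forall_eq_or_imp] at hp
    refine ih hp.2 ?_
    have hvS : v ∉ s.sepSet := hp.2 v q.start_mem_support
    rcases s.mem_A_or_B v with hvA | hvB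
    · exact ⟨hvA, fun hvB => hvS ⟨hvA, hvB⟩⟩
    · exact absurd huv (s.no_edge u ha v ⟨hvB, fun hvA => hvS ⟨hvA, hvB⟩⟩)

lemma AvoidReach.mem_A_diff_B {s : GraphSep G} {a x : V} (h : AvoidReach G s.sepSet a x)
    (ha : a ∈ s.A \ s.B) : x ∈ s.A \ s.B := by
  obtain ⟨p, hp⟩ := h
  exact s.mem_A_diff_B_of_walk p hp ha

lemma sepSet_inv (s : GraphSep G) : s.inv.sepSet = s.sepSet := Set.inter_comm _ _

lemma order_inv (s : GraphSep G) : s.inv.order = s.order := by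
  rw [order, ← sepSet, ← sepSet_inv]; rfl

lemma sepSet_join_subset (s t : GraphSep G) : (s.join t).sepSet ⊆ s.sepSet ∪ t.sepSet := by
  rintro x ⟨hsA | htA, hsB, htB⟩
  exacts [Or.inl ⟨hsA, hsB⟩, Or.inr ⟨htA, htB⟩]

def HasTightCompLeft (s : GraphSep G) : Prop :=
  ∃ C, IsCompOf G s.sepSet C ∧ nbhd G C = s.sepSet ∧ C ⊆ s.A \ s.B

lemma isTight_iff (s : GraphSep G) : s.IsTight ↔ s.HasTightCompLeft ∧ s.inv.HasTightCompLeft := by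
  simp only [IsTight, HasTightCompLeft, sepSet_inv]
  rfl

section Profile

variable {k : ℕ∞} {P P' : Set (GraphSep G)} {s t : GraphSep G}

lemma IsProfile.join_mem (hP : IsProfile k P) (hs : s ∈ P) (ht : t ∈ P)
    (hst : (s.join t).order < k) : s.join t ∈ P :=
  (hP.1.2.1 _ hst).resolve_right (hP.2.2 s hs t ht)

lemma IsProfile.mem_of_A_union_B_eq_univ (hP : IsProfile k P) (hreg : RegularP P) (hs : s ∈ P)
    (ht : t.order < k) (hst : (s.join t.inv).order < k) (hcover : s.A ∪ t.B = Set.univ) :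
    t ∈ P :=
  (hP.1.2.1 t ht).resolve_right fun htinv => hreg _ (hP.join_mem hs htinv hst) hcover

lemma EffDist.mem_of_order_lt (heff : EffDist s P P') (hP' : IsOrientation k P') (ht : t ∈ P)
    (htk : t.order < k) (hts : t.order < s.order) : t ∈ P' :=
  (hP'.2.1 t htk).resolve_right fun htinv =>
    (heff.2 t (Or.inl ⟨ht, htinv⟩)).not_gt hts

lemma EffDist.symm (heff : EffDist s P P') : EffDist s P' P :=
  ⟨heff.1.symm.imp (fun h => ⟨h.2, h.1⟩) (fun h => ⟨h.2, h.1⟩),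
    fun t ht => heff.2 t (ht.symm.imp (fun h => ⟨h.2, h.1⟩) (fun h => ⟨h.2, h.1⟩))⟩

lemma EffDist.inv (heff : EffDist s P P') : EffDist s.inv P P' :=
  ⟨heff.1.symm, fun t ht => (order_inv s).trans_le (heff.2 t ht)⟩

lemma IsProfile.exists_mem_join_of_finite {ι : Type} (hP : IsProfile k P) {r : GraphSep G}
    (hr : r ∈ P) {X : Set V} (hX : X.encard < k) (hrX : r.sepSet ⊆ X) {u : ι → GraphSep G}
    {F : Set ι} (hF : F.Finite) (hu : ∀ i ∈ F, u i ∈ P ∧ (u i).sepSet ⊆ X) :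
    ∃ j ∈ P, j.A = r.A ∪ ⋃ i ∈ F, (u i).A ∧ j.sepSet ⊆ X := by
  induction F, hF using Set.Finite.induction_on with
  | empty => exact ⟨r, hr, by simp, hrX⟩
  | @insert i F _ _ ih =>
    obtain ⟨j, hjP, hjA, hjX⟩ := ih fun i hi => hu i (Set.mem_insert_of_mem _ hi)
    obtain ⟨huP, huX⟩ := hu i (Set.mem_insert _ _)
    have hX' : (j.join (u i)).sepSet ⊆ X :=
      (sepSet_join_subset _ _).trans (Set.union_subset hjX huX)
    refine ⟨j.join (u i), hP.join_mem hjP huP ((Set.encard_mono hX').trans_lt hX), ?_, hX'⟩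
    change j.A ∪ (u i).A = _
    rw [hjA, Set.biUnion_insert]
    ac_rfl

end Profile

section AwaySep

variable (s : GraphSep G) (v : V)

/-- The union of the components of `G − (A ∩ B)` inside `A ∖ B` that are not adjacent
to `v`. -/
def awayFrom : Set V :=
  {w | w ∈ s.A \ s.B ∧ ∀ x, AvoidReach G s.sepSet w x → ¬ G.Adj x v}

lemma awayFrom_subset : s.awayFrom v ⊆ s.A \ s.B := fun _ hw => hw.1

lemma mem_or_mem_awayFrom_of_adj {a b : V} (ha : a ∈ s.awayFrom v) (hab : G.Adj a b) :
    b ∈ s.sepSet \ {v} ∨ b ∈ s.awayFrom v := by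
  have hra : AvoidReach G s.sepSet a a := avoidReach_refl fun haS => ha.1.2 haS.2
  by_cases hbS : b ∈ s.sepSet
  · exact Or.inl ⟨hbS, fun hbv => ha.2 a hra (hbv ▸ hab)⟩
  · have hrb := hra.of_adj hab hbS
    exact Or.inr ⟨hrb.mem_A_diff_B ha.1, fun x hx => ha.2 x (hrb.trans hx)⟩

def awaySep : GraphSep G where
  A := (s.sepSet \ {v}) ∪ s.awayFrom v
  B := (s.awayFrom v)ᶜ
  union_eq := by
    rw [Set.union_assoc, Set.union_compl_self, Set.union_univ]
  no_edge := by
    rintro a ⟨-, haW⟩ b ⟨-, hb⟩ hab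
    exact hb (s.mem_or_mem_awayFrom_of_adj v (not_not.1 haW) hab)

lemma sepSet_awaySep : (s.awaySep v).sepSet = s.sepSet \ {v} := by
  ext x
  refine ⟨?_, fun hx => ⟨Or.inl hx, fun hxW => (s.awayFrom_subset v hxW).2 hx.1.2⟩⟩
  rintro ⟨hx | hxW, hxW'⟩
  exacts [hx, absurd hxW hxW']

lemma sepSet_awaySep_subset : (s.awaySep v).sepSet ⊆ s.sepSet :=
  (s.sepSet_awaySep v).trans_subset Set.sdiff_subset

lemma order_awaySep_lt (hfin : s.order < ⊤) (hv : v ∈ s.sepSet) :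
    (s.awaySep v).order < s.order := by
  have hS : s.sepSet.Finite := Set.encard_lt_top_iff.1 hfin
  rw [order, ← sepSet, sepSet_awaySep]
  exact (hS.subset Set.sdiff_subset).encard_lt_encard (Set.sdiff_singleton_ssubset.2 hv)

lemma exists_mem_awayFrom_of_not_hasTightCompLeft {s : GraphSep G} (h : ¬ s.HasTightCompLeft)
    {w : V} (hw : w ∈ s.A \ s.B) : ∃ v ∈ s.sepSet, w ∈ s.awayFrom v := by
  set C := {x | AvoidReach G s.sepSet w x}
  have hwS : w ∉ s.sepSet := fun hwS => hw.2 hwS.2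
  have hnbhd : nbhd G C ≠ s.sepSet := fun hC =>
    h ⟨C, ⟨w, hwS, rfl⟩, hC, fun x hx => hx.mem_A_diff_B hw⟩
  obtain ⟨v, hvS, hvC⟩ := Set.exists_of_ssubset (nbhd_setOf_avoidReach_subset.ssubset_of_ne hnbhd)
  exact ⟨v, hvS, hw, fun x hx hxv => hvC ⟨fun hvC => hvC.not_mem_right hvS, x, hx, hxv.symm⟩⟩

lemma awaySep_mem {k : ℕ∞} {P : Set (GraphSep G)} (hP : IsProfile k P) (hreg : RegularP P)
    (hs : s ∈ P) : s.awaySep v ∈ P := by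
  have hk : s.order < k := hP.1.1 s hs
  have hjoin : (s.join (s.awaySep v).inv).sepSet ⊆ s.sepSet :=
    (sepSet_join_subset _ _).trans <| Set.union_subset subset_rfl <|
      (sepSet_inv _).trans_subset (s.sepSet_awaySep_subset v)
  refine hP.mem_of_A_union_B_eq_univ hreg hs
    ((Set.encard_mono (s.sepSet_awaySep_subset v)).trans_lt hk)
    ((Set.encard_mono hjoin).trans_lt hk) (Set.eq_univ_of_forall fun x => ?_)
  by_cases hx : x ∈ s.awayFrom v
  exacts [Or.inl (s.awayFrom_subset v hx).1, Or.inr hx]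

end AwaySep

lemma hasTightCompLeft_of_effDist {k k' : ℕ∞} {P P' : Set (GraphSep G)}
    (hP : IsProfile k P) (hP' : IsProfile k' P') (hreg : RegularP P) (hreg' : RegularP P')
    {s : GraphSep G} (hfin : s.order < ⊤) (heff : EffDist s P P') (hs : s ∈ P)
    (hs' : s.inv ∈ P') : s.HasTightCompLeft := by
  by_contra hno
  have hk' : s.order < k' := by simpa only [order_inv] using hP'.1.1 _ hs'
  have hmemP' : ∀ v ∈ s.sepSet, s.awaySep v ∈ P' ∧ (s.awaySep v).sepSet ⊆ s.sepSet :=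
    fun v hv => ⟨heff.mem_of_order_lt hP'.1 (s.awaySep_mem v hP hreg hs)
      ((Set.encard_mono (s.sepSet_awaySep_subset v)).trans_lt hk') (s.order_awaySep_lt v hfin hv),
      s.sepSet_awaySep_subset v⟩
  obtain ⟨j, hjP', hjA, -⟩ := hP'.exists_mem_join_of_finite hs' hk' (sepSet_inv s).subset
    (Set.encard_lt_top_iff.1 hfin) hmemP'
  refine hreg' j hjP' (hjA ▸ Set.eq_univ_of_forall fun x => ?_)
  by_cases hxB : x ∈ s.B
  · exact Or.inl hxB
  obtain ⟨v, hv, hxv⟩ :=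
    exists_mem_awayFrom_of_not_hasTightCompLeft hno ⟨(s.mem_A_or_B x).resolve_right hxB, hxB⟩
  exact Or.inr (Set.mem_biUnion hv (Or.inr hxv))

end GraphSep

open GraphSep in
theorem stmt14_general {V : Type} (G : SimpleGraph V)
    (P P' : Set (GraphSep G))
    (hP : IsProfileIn G P) (hP' : IsProfileIn G P')
    (hreg : RegularP P) (hreg' : RegularP P')
    (s : GraphSep G) (hfin : s.order < ⊤)
    (heff : EffDist s P P') :
    IsTight s := by
  obtain ⟨k, hP⟩ := hP
  obtain ⟨k', hP'⟩ := hP'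
  have hfin' : s.inv.order < ⊤ := by rwa [order_inv]
  rw [isTight_iff]
  rcases heff.1 with ⟨hs, hs'⟩ | ⟨hs, hs'⟩
  · exact ⟨hasTightCompLeft_of_effDist hP hP' hreg hreg' hfin heff hs hs',
      hasTightCompLeft_of_effDist hP' hP hreg' hreg hfin' heff.symm.inv hs' hs⟩
  · exact ⟨hasTightCompLeft_of_effDist hP' hP hreg' hreg hfin heff.symm hs' hs,
      hasTightCompLeft_of_effDist hP hP' hreg hreg' hfin' heff.inv hs hs'⟩

open GraphSep in
/-- a finite-order separation efficiently distinguishing two distinct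
regular profiles is tight. -/
theorem stmt14 {V : Type} (G : SimpleGraph V)
    (P P' : Set (GraphSep G))
    (hP : IsProfileIn G P) (hP' : IsProfileIn G P')
    (hreg : RegularP P) (hreg' : RegularP P')
    (hne : P ≠ P')
    (s : GraphSep G) (hfin : s.order < ⊤)
    (heff : EffDist s P P') :
    IsTight s :=
  stmt14_general G P P' hP hP' hreg hreg' s hfin heff
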